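/- Let A ∈ I and let 𝔞 be an ideal of 𝒪 for which the divisibility chain δ₁(A) | 𝔞 | δ₂(A)·δ₁(A)⁻¹ does NOT hold. Then μ_𝔞(A) = 0, i.e. no right coset U·B contained in U A U has 𝔤(B) = 𝔞. -/

import Mathlib

open Matrix

/-- The right coset `U·B` with respect to the unimodular group
`U = GL₂(𝒪)` (matrices over `𝒪` whose determinant is a unit). -/
def rightCoset' {O : Type*} [CommRing O] (B : Matrix (Fin 2) (Fin 2) O) :
    Set (Matrix (Fin 2) (Fin 2) O) :=
  {X | ∃ P : Matrix (Fin 2) (Fin 2) O, IsUnit P.det ∧ X = P * B}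

/-- The double coset `U A U`. -/
def doubleCoset' {O : Type*} [CommRing O] (A : Matrix (Fin 2) (Fin 2) O) :
    Set (Matrix (Fin 2) (Fin 2) O) :=
  {X | ∃ P Q : Matrix (Fin 2) (Fin 2) O, IsUnit P.det ∧ IsUnit Q.det ∧ X = P * A * Q}

/-- The first determinantal divisor `δ₁(A)`. -/
def delta1 {O : Type*} [CommRing O] (A : Matrix (Fin 2) (Fin 2) O) : Ideal O :=
  Ideal.span {A 0 0, A 0 1, A 1 0, A 1 1}

/-- The second determinantal divisor `δ₂(A) = (det A)𝒪`. -/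
def delta2 {O : Type*} [CommRing O] (A : Matrix (Fin 2) (Fin 2) O) : Ideal O :=
  Ideal.span {A.det}

/-- The g.c.d. `𝔤(A)` of the first column of `A`. -/
def gcol {O : Type*} [CommRing O] (A : Matrix (Fin 2) (Fin 2) O) : Ideal O :=
  Ideal.span {A 0 0, A 1 0}

/-- `μ_𝔞(A)`: the number of right cosets `U·B` contained in `U A U` whose first column has
g.c.d. `𝔞`. -/
noncomputable def muIdeal {O : Type*} [CommRing O] (A : Matrix (Fin 2) (Fin 2) O)
    (𝔞 : Ideal O) : ℕ :=
  Nat.card {S : Set (Matrix (Fin 2) (Fin 2) O) //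
    ∃ B, S = rightCoset' B ∧ S ⊆ doubleCoset' A ∧ gcol B = 𝔞}

/-- `T` is a transversal of the quotient of ideals `I/J`: it consists of elements of `I` and
contains exactly one representative of each residue class of `I` modulo `J`. -/
def IsTransversal {O : Type*} [CommRing O] (I J : Ideal O) (T : Set O) : Prop :=
  T ⊆ (I : Set O) ∧ ∀ x ∈ I, ∃! t, t ∈ T ∧ x - t ∈ J

/-! Both determinantal divisors are invariant on the double coset `U A U`, and for every matrix
`B` the column g.c.d. satisfies `δ₁(B) | 𝔤(B)` and, by expanding `det B` along the first column,
`𝔤(B) δ₁(B) | δ₂(B)`. Hence every `B ∈ U A U` has `δ₁(A) | 𝔤(B) | δ₂(A) δ₁(A)⁻¹`. -/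

section

variable {O : Type*} [CommRing O]

lemma entry_mem_delta1 (A : Matrix (Fin 2) (Fin 2) O) (i j : Fin 2) : A i j ∈ delta1 A := by
  fin_cases i <;> fin_cases j <;> exact Ideal.subset_span (by simp)

lemma delta1_le_iff {A : Matrix (Fin 2) (Fin 2) O} {I : Ideal O} :
    delta1 A ≤ I ↔ ∀ i j, A i j ∈ I := by
  refine ⟨fun h i j => h (entry_mem_delta1 A i j), fun h => Ideal.span_le.mpr ?_⟩
  simp only [Set.insert_subset_iff, Set.singleton_subset_iff, SetLike.mem_coe]
  exact ⟨h 0 0, h 0 1, h 1 0, h 1 1⟩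

lemma delta1_mul_mul_le (P A Q : Matrix (Fin 2) (Fin 2) O) :
    delta1 (P * A * Q) ≤ delta1 A := by
  refine delta1_le_iff.mpr fun i j => ?_
  simp only [mul_apply]
  exact Ideal.sum_mem _ fun l _ => Ideal.mul_mem_right _ _ <|
    Ideal.sum_mem _ fun k _ => Ideal.mul_mem_left _ _ (entry_mem_delta1 A k l)

lemma delta1_mul_mul_of_isUnit_det {P Q : Matrix (Fin 2) (Fin 2) O} (hP : IsUnit P.det)
    (hQ : IsUnit Q.det) (A : Matrix (Fin 2) (Fin 2) O) : delta1 (P * A * Q) = delta1 A := by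
  refine le_antisymm (delta1_mul_mul_le P A Q) ?_
  have hA : P⁻¹ * (P * A * Q) * Q⁻¹ = A := by
    simp only [Matrix.mul_assoc, mul_nonsing_inv Q hQ, Matrix.mul_one,
      nonsing_inv_mul_cancel_left P A hP]
  calc delta1 A = delta1 (P⁻¹ * (P * A * Q) * Q⁻¹) := by rw [hA]
    _ ≤ delta1 (P * A * Q) := delta1_mul_mul_le _ _ _

lemma delta2_mul_mul_of_isUnit_det {P Q : Matrix (Fin 2) (Fin 2) O} (hP : IsUnit P.det)
    (hQ : IsUnit Q.det) (A : Matrix (Fin 2) (Fin 2) O) : delta2 (P * A * Q) = delta2 A := by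
  rw [delta2, delta2, det_mul, det_mul, Ideal.span_singleton_mul_right_unit hQ,
    Ideal.span_singleton_mul_left_unit hP]

lemma gcol_le_delta1 (B : Matrix (Fin 2) (Fin 2) O) : gcol B ≤ delta1 B :=
  Ideal.span_le.mpr <| by
    simp only [Set.insert_subset_iff, Set.singleton_subset_iff, SetLike.mem_coe]
    exact ⟨entry_mem_delta1 B 0 0, entry_mem_delta1 B 1 0⟩

lemma delta2_le_gcol_mul_delta1 (B : Matrix (Fin 2) (Fin 2) O) :
    delta2 B ≤ gcol B * delta1 B := by
  rw [delta2, Ideal.span_singleton_le_iff_mem, det_fin_two, mul_comm (B 0 1)]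
  exact sub_mem
    (Ideal.mul_mem_mul (Ideal.subset_span (by simp)) (entry_mem_delta1 B 1 1))
    (Ideal.mul_mem_mul (Ideal.subset_span (by simp)) (entry_mem_delta1 B 0 1))

lemma gcol_le_delta1_and_delta2_le_of_mem_doubleCoset {A B : Matrix (Fin 2) (Fin 2) O}
    (hB : B ∈ doubleCoset' A) : gcol B ≤ delta1 A ∧ delta2 A ≤ gcol B * delta1 A := by
  obtain ⟨P, Q, hP, hQ, rfl⟩ := hB
  rw [← delta1_mul_mul_of_isUnit_det hP hQ A, ← delta2_mul_mul_of_isUnit_det hP hQ A]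
  exact ⟨gcol_le_delta1 _, delta2_le_gcol_mul_delta1 _⟩

lemma mem_rightCoset'_self (B : Matrix (Fin 2) (Fin 2) O) : B ∈ rightCoset' B :=
  ⟨1, by simp, by simp⟩

end

theorem stmt9_general {O : Type*} [CommRing O]
    (A : Matrix (Fin 2) (Fin 2) O)
    (𝔞 : Ideal O)
    -- the divisibility chain `δ₁(A) | 𝔞 | δ₂(A)·δ₁(A)⁻¹` does NOT hold
    -- (divisibility of ideals is reverse inclusion):
    (h : ¬(𝔞 ≤ delta1 A ∧ delta2 A ≤ 𝔞 * delta1 A)) :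
    muIdeal A 𝔞 = 0 ∧ ∀ B ∈ doubleCoset' A, gcol B ≠ 𝔞 := by
  have hgcol : ∀ B ∈ doubleCoset' A, gcol B ≠ 𝔞 := by
    rintro B hB rfl
    exact h (gcol_le_delta1_and_delta2_le_of_mem_doubleCoset hB)
  refine ⟨Nat.card_eq_zero.mpr (Or.inl ⟨?_⟩), hgcol⟩
  rintro ⟨_, B, rfl, hsub, hB⟩
  exact hgcol B (hsub (mem_rightCoset'_self B)) hB

theorem stmt9 {O : Type*} [CommRing O] [IsDomain O] [IsDedekindDomain O]
    -- `𝒪` is norm-finite: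
    (hnf : ∀ x : O, x ≠ 0 → Finite (O ⧸ Ideal.span {x}))
    (A : Matrix (Fin 2) (Fin 2) O) (hA : A.det ≠ 0)
    (𝔞 : Ideal O)
    -- the divisibility chain `δ₁(A) | 𝔞 | δ₂(A)·δ₁(A)⁻¹` does NOT hold
    -- (divisibility of ideals is reverse inclusion):
    (h : ¬(𝔞 ≤ delta1 A ∧ delta2 A ≤ 𝔞 * delta1 A)) :
    muIdeal A 𝔞 = 0 ∧ ∀ B ∈ doubleCoset' A, gcol B ≠ 𝔞 :=
  stmt9_general A 𝔞 h
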